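/- Let Φ : ℝ^d → ℝ be differentiable with L-Lipschitz gradient, let λ, ω, ω₀ ∈ ℝ^d, μ > 0, and suppose λ = −∇f(ω) where ‖∇Φ(ω) − ∇f(ω)‖ ≤ ρ. Define L^Φ(ω, ω₀, λ) = Φ(ω) + ⟨λ, ω − ω₀⟩ + (μ/2)‖ω − ω₀‖². Then L^Φ(ω, ω₀, λ) ≥ Φ(ω₀) − ρ²/(2L) + ((μ − 2L)/2)‖ω₀ − ω‖². -/

import Mathlib

open scoped RealInnerProductSpace

/-- Descent lemma: quadratic upper bound from Lipschitz gradient. -/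
lemma descent_aux {d : ℕ} (Φ : EuclideanSpace ℝ (Fin d) → ℝ)
    (G : EuclideanSpace ℝ (Fin d) → EuclideanSpace ℝ (Fin d))
    (hgrad : ∀ x, HasGradientAt Φ (G x) x)
    (L : ℝ) (hL : 0 ≤ L)
    (hLip : ∀ x y, ‖G x - G y‖ ≤ L * ‖x - y‖)
    (x y : EuclideanSpace ℝ (Fin d)) :
    Φ y ≤ Φ x + ⟪G x, y - x⟫ + L / 2 * ‖y - x‖ ^ 2 := by
  set v := y - x with hv
  set h : ℝ → ℝ := fun t => Φ (x + t • v) - t * ⟪G x, v⟫ - L / 2 * t ^ 2 * ‖v‖ ^ 2 with hh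
  have hline : ∀ t : ℝ, HasDerivAt (fun t : ℝ => x + t • v) v t := fun t => by
    simpa using ((hasDerivAt_id t).smul_const v).const_add x
  have hderiv : ∀ t : ℝ, HasDerivAt h
      (⟪G (x + t • v), v⟫ - ⟪G x, v⟫ - L * t * ‖v‖ ^ 2) t := by
    intro t
    have h1 : HasDerivAt (fun t : ℝ => Φ (x + t • v)) ⟪G (x + t • v), v⟫ t := by
      have := ((hgrad (x + t • v)).hasFDerivAt).comp_hasDerivAt t (hline t)
      simpa [InnerProductSpace.toDual_apply_apply, Function.comp_def] using this
    have h2 : HasDerivAt (fun t : ℝ => t * ⟪G x, v⟫) ⟪G x, v⟫ t := by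
      simpa using (hasDerivAt_id t).mul_const ⟪G x, v⟫
    have h3 : HasDerivAt (fun t : ℝ => L / 2 * t ^ 2 * ‖v‖ ^ 2) (L * t * ‖v‖ ^ 2) t := by
      have := (((hasDerivAt_pow 2 t).const_mul (L / 2)).mul_const (‖v‖ ^ 2))
      exact this.congr_deriv (by rw [show (2:ℕ) - 1 = 1 from rfl]; push_cast; ring)
    exact (h1.sub h2).sub h3
  have hmono : AntitoneOn h (Set.Icc 0 1) := by
    apply antitoneOn_of_deriv_nonpos (convex_Icc 0 1)
    · exact fun t _ => (hderiv t).differentiableAt.continuousAt.continuousWithinAt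
    · intro t _
      exact (hderiv t).differentiableAt.differentiableWithinAt
    · intro t ht
      rw [(hderiv t).deriv]
      have ht0 : 0 ≤ t := le_of_lt (by simpa using (Set.mem_Ioo.mp (by simpa using ht)).1)
      have key : ⟪G (x + t • v) - G x, v⟫ ≤ L * t * ‖v‖ ^ 2 := by
        calc ⟪G (x + t • v) - G x, v⟫ ≤ ‖G (x + t • v) - G x‖ * ‖v‖ :=
              real_inner_le_norm _ _
          _ ≤ (L * ‖(x + t • v) - x‖) * ‖v‖ := by
              gcongr; exact hLip _ _
          _ = L * t * ‖v‖ ^ 2 := by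
              simp [norm_smul, abs_of_nonneg ht0]; ring
      have : ⟪G (x + t • v), v⟫ - ⟪G x, v⟫ = ⟪G (x + t • v) - G x, v⟫ := by
        rw [inner_sub_left]
      linarith [key, this]
  have h10 : h 1 ≤ h 0 := hmono (by norm_num) (by norm_num) (by norm_num)
  simp only [hh, one_smul, zero_smul, add_zero, one_pow, one_mul] at h10
  have : x + v = y := by simp [hv]
  rw [this] at h10
  linarith

/-- Lower bound of the local augmented Lagrangian by the global objective. -/
theorem stmt_6 {d : ℕ} (Φ : EuclideanSpace ℝ (Fin d) → ℝ)
    (G : EuclideanSpace ℝ (Fin d) → EuclideanSpace ℝ (Fin d))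
    (hgrad : ∀ x, HasGradientAt Φ (G x) x)
    (L μ : ℝ) (hL : 0 < L) (hμ : 0 < μ)
    (hLip : ∀ x y, ‖G x - G y‖ ≤ L * ‖x - y‖)
    (ω ω₀ gfω lam : EuclideanSpace ℝ (Fin d)) (ρ : ℝ)
    (hlam : lam = -gfω) (hρ : ‖G ω - gfω‖ ≤ ρ)
    (LΦ : ℝ) (hLΦ : LΦ = Φ ω + ⟪lam, ω - ω₀⟫ + (μ / 2) * ‖ω - ω₀‖ ^ 2) :
    Φ ω₀ - ρ ^ 2 / (2 * L) + ((μ - 2 * L) / 2) * ‖ω₀ - ω‖ ^ 2 ≤ LΦ := by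
  have hdesc := descent_aux Φ G hgrad L hL.le hLip ω ω₀
  -- inner product bound: ⟪gfω - G ω, ω₀ - ω⟫ ≥ -(ρ²/(2L) + L/2 ‖ω₀-ω‖²)
  have hinner : -(ρ ^ 2 / (2 * L) + L / 2 * ‖ω₀ - ω‖ ^ 2) ≤ ⟪gfω - G ω, ω₀ - ω⟫ := by
    have h1 : |⟪gfω - G ω, ω₀ - ω⟫| ≤ ‖gfω - G ω‖ * ‖ω₀ - ω‖ :=
      abs_real_inner_le_norm _ _
    have h2 : ‖gfω - G ω‖ ≤ ρ := by rwa [norm_sub_rev]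
    have h3 : ‖gfω - G ω‖ * ‖ω₀ - ω‖ ≤ ρ * ‖ω₀ - ω‖ := by
      gcongr
    have h2L : (0:ℝ) < 2 * L := by linarith
    have hamgm : ρ * ‖ω₀ - ω‖ ≤ ρ ^ 2 / (2 * L) + L / 2 * ‖ω₀ - ω‖ ^ 2 := by
      have key2 : 2 * L * (ρ * ‖ω₀ - ω‖) ≤
          2 * L * (ρ ^ 2 / (2 * L) + L / 2 * ‖ω₀ - ω‖ ^ 2) := by
        have hd : 2 * L * (ρ ^ 2 / (2 * L)) = ρ ^ 2 := by field_simp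
        nlinarith [sq_nonneg (ρ - L * ‖ω₀ - ω‖)]
      exact (mul_le_mul_iff_right₀ h2L).mp key2
    have := (abs_le.mp h1).1
    linarith
  have hsplit : ⟪lam, ω - ω₀⟫ = ⟪gfω - G ω, ω₀ - ω⟫ + ⟪G ω, ω₀ - ω⟫ := by
    rw [hlam, show (ω - ω₀ : EuclideanSpace ℝ (Fin d)) = -(ω₀ - ω) by abel]
    rw [inner_neg_neg, inner_sub_left]
    ring
  have hnorm : ‖ω - ω₀‖ = ‖ω₀ - ω‖ := norm_sub_rev _ _
  rw [hLΦ, hsplit, hnorm]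
  linarith
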